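/- Define co_n by the identity in ℝ[[X]]: Σ_{n≥0} (n!)^2 X^n/n! = exp(Σ_{n≥1} co_n X^n/n!), and define ip_k by Σ_{k≥1} ip_k X^k = 1 − (Σ_{n≥0} n!·X^n)^{−1}. Then for every integer r ≥ 0, as n → ∞, co_n/(n!)^2 = 1 − Σ_{k=1}^{r} ip_k/(n)_k + O(1/n^{r+1}), where (n)_k = n(n−1)⋯(n−k+1) is the falling factorial. -/

import Mathlib

/-!
Let `A = ∑ n! Xⁿ`. The hypotheses say `A = exp B` for `B = ∑ coₙ Xⁿ / n!` and
`A⁻¹ = 1 - ∑ ip_k X^k`, so `B' = A' A⁻¹` and `(A⁻ᵗ)' = A' · (-t A⁻⁽ᵗ⁺¹⁾)`.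

Bender's method: if `F' = A' G` with `|g_k| ≤ C k!`, then `n fₙ = ∑_{k ≤ n} g_k (n-k) (n-k)!`.
Because `k! (n-k)!` is unimodal in `k`, the terms with `r < k < n - r` contribute
`O(n (n-r-1)!)`. The terms `k ≤ r` give `n ∑_{k ≤ r} g_k (n-k)!` plus a correction which,
once `G' = A' H` is used, cancels the terms `k ≥ n - r` up to the errors of the expansions of
`g_{n-j}` to order `r - j`. So `fₙ = ∑_{k ≤ r} g_k (n-k)! + O((n-r-1)!)` follows by induction
on `r`, simultaneously for all powers of `A⁻¹`, and then for `F = B`, `G = A⁻¹`. Dividing by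
`n!` with `(n-k)!/n! = 1/(n)_k` gives the theorem.
-/

open Filter Asymptotics Finset

/-- A real sequence `u` is *gargantuan* if `u (n-1) / u n → 0` and, for every `r ≥ 1`,
`∑_{k=r}^{n-r} |u k * u (n-k)| = O(u (n-r))` as `n → ∞`. -/
def Gargantuan (u : ℕ → ℝ) : Prop :=
  Tendsto (fun n => u (n - 1) / u n) atTop (nhds 0) ∧
    ∀ r : ℕ, 1 ≤ r →
      (fun n => ∑ k ∈ Finset.Icc r (n - r), |u k * u (n - k)|) =O[atTop]
        fun n => u (n - r)

/-- The exponential `exp C` of a formal power series `C` (intended for `C` with zero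
constant term): the coefficient of `X^n` is `∑_{k=0}^{n} [X^n] (C^k) / k!`. -/
noncomputable def expPS (C : PowerSeries ℝ) : PowerSeries ℝ :=
  PowerSeries.mk fun n =>
    ∑ k ∈ Finset.range (n + 1), (PowerSeries.coeff n (C ^ k)) / (Nat.factorial k)

open scoped Nat

namespace Nat

theorem choose_le_choose_of_le_of_add_le {n s j : ℕ} (hsj : s ≤ j) (hjs : j + s ≤ n) :
    n.choose s ≤ n.choose j := by
  have up : ∀ j, s ≤ j → j ≤ n / 2 → n.choose s ≤ n.choose j := by
    intro j hsj
    induction j, hsj using Nat.le_induction with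
    | base => exact fun _ ↦ le_rfl
    | succ j _ ih =>
      exact fun hj ↦ (ih (by omega)).trans (choose_le_succ_of_lt_half_left (by omega))
  rcases le_or_gt j (n / 2) with hj | hj
  · exact up j hsj hj
  · rw [← choose_symm (by omega : j ≤ n)]
    exact up (n - j) (by omega) (by omega)

theorem factorial_mul_factorial_le_of_le {n s j : ℕ} (hsj : s ≤ j) (hjs : j + s ≤ n) :
    j ! * (n - j)! ≤ s ! * (n - s)! := by
  have hj := choose_mul_factorial_mul_factorial (by omega : j ≤ n)
  have hs := choose_mul_factorial_mul_factorial (by omega : s ≤ n)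
  have hpos : 0 < n.choose j := choose_pos (by omega)
  refine Nat.le_of_mul_le_mul_left ?_ hpos
  calc n.choose j * (j ! * (n - j)!) = n.choose s * (s ! * (n - s)!) := by
        rw [← mul_assoc, hj, ← mul_assoc, hs]
    _ ≤ n.choose j * (s ! * (n - s)!) :=
        Nat.mul_le_mul_right _ (choose_le_choose_of_le_of_add_le hsj hjs)

theorem sum_Ioo_factorial_mul_factorial_le (s n : ℕ) :
    ∑ k ∈ Ioo s (n - s), k ! * (n - k)! ≤ (s + 1)! * (n - s)! := by
  rcases lt_or_ge s (n - s) with h | h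
  · calc ∑ k ∈ Ioo s (n - s), k ! * (n - k)!
        ≤ ∑ _k ∈ Ioo s (n - s), (s + 1)! * (n - (s + 1))! := by
          refine sum_le_sum fun k hk ↦ ?_
          rw [mem_Ioo] at hk
          exact factorial_mul_factorial_le_of_le (by omega) (by omega)
      _ ≤ (n - s) * ((s + 1)! * (n - (s + 1))!) := by
          rw [sum_const, card_Ioo, smul_eq_mul]
          exact Nat.mul_le_mul_right _ (by omega)
      _ = (s + 1)! * (n - s)! := by
          rw [show n - s = n - (s + 1) + 1 by omega, factorial_succ (n - (s + 1))]
          ring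
  · simp [Ioo_eq_empty_of_le h]

theorem sum_Icc_factorial_mul_factorial_le {s n : ℕ} (h : 2 * s < n) :
    ∑ k ∈ Icc s (n - s), k ! * (n - k)! ≤ (2 * s ! + (s + 1)!) * (n - s)! := by
  rw [Icc_eq_cons_Ioc (by omega), sum_cons, Ioc_eq_cons_Ioo (by omega), sum_cons,
    show n - (n - s) = s by omega]
  have := sum_Ioo_factorial_mul_factorial_le s n
  nlinarith

theorem pow_le_two_pow_mul_descFactorial {n k : ℕ} (h : 2 * k ≤ n) :
    n ^ k ≤ 2 ^ k * n.descFactorial k :=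
  calc n ^ k ≤ (2 * (n + 1 - k)) ^ k := Nat.pow_le_pow_left (by omega) k
    _ = 2 ^ k * (n + 1 - k) ^ k := mul_pow ..
    _ ≤ 2 ^ k * n.descFactorial k := Nat.mul_le_mul_left _ (pow_sub_le_descFactorial n k)

theorem sum_antidiagonal_factorial_mul_factorial_le (n : ℕ) :
    ∑ p ∈ antidiagonal n, p.1 ! * p.2 ! ≤ 3 * n ! := by
  rcases Nat.eq_zero_or_pos n with rfl | hn
  · simp
  rw [Finset.Nat.sum_antidiagonal_eq_sum_range_succ (fun i j ↦ i ! * j !),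
    Nat.range_succ_eq_Icc_zero]
  simpa using sum_Icc_factorial_mul_factorial_le (s := 0) hn

theorem factorial_sub_div_factorial {n k : ℕ} (h : k ≤ n) :
    ((n - k)! : ℝ) / n ! = (n.descFactorial k : ℝ)⁻¹ := by
  rw [← factorial_mul_descFactorial h, Nat.cast_mul, div_mul_cancel_left₀ (by positivity)]

end Nat

theorem isBigO_inv_descFactorial (k : ℕ) :
    (fun n : ℕ ↦ (n.descFactorial k : ℝ)⁻¹) =O[atTop] fun n ↦ 1 / (n : ℝ) ^ k := by
  refine isBigO_iff.2 ⟨2 ^ k, ?_⟩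
  filter_upwards [eventually_ge_atTop (2 * k), eventually_gt_atTop 0] with n hn hn0
  have hpos : (0 : ℝ) < n.descFactorial k := by
    exact_mod_cast Nat.descFactorial_pos.2 (by omega)
  have hle : (n : ℝ) ^ k ≤ 2 ^ k * n.descFactorial k := by
    exact_mod_cast Nat.pow_le_two_pow_mul_descFactorial hn
  rw [Real.norm_eq_abs, Real.norm_eq_abs, abs_inv, abs_of_pos hpos, abs_of_pos (by positivity),
    inv_le_iff_one_le_mul₀ hpos]
  rw [mul_one_div, div_mul_eq_mul_div, le_div_iff₀ (by positivity)]
  linarith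

theorem Finset.sum_range_succ_eq_add_sum_Icc_add {M : Type*} [AddCommMonoid M] (f : ℕ → M)
    {r n : ℕ} (h : 2 * r < n) :
    ∑ k ∈ range (n + 1), f k =
      ∑ k ∈ range (r + 1), f k + ∑ k ∈ Icc (r + 1) (n - (r + 1)), f k +
        ∑ j ∈ range (r + 1), f (n - j) := by
  rw [← sum_range_add_sum_Ico f (by omega : r + 1 ≤ n + 1),
    ← sum_Ico_consecutive f (by omega : r + 1 ≤ n - r) (by omega : n - r ≤ n + 1),
    ← add_assoc, show n - r = n - (r + 1) + 1 by omega, Ico_add_one_right_eq_Icc,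
    sum_Ico_eq_sum_range, show n + 1 - (n - (r + 1) + 1) = r + 1 by omega,
    ← sum_range_reflect (fun j ↦ f (n - j))]
  exact congrArg _ (sum_congr rfl fun j hj ↦ congrArg f (by rw [mem_range] at hj; omega))

open PowerSeries

noncomputable def factorialSeries : ℝ⟦X⟧ := mk fun n ↦ (n ! : ℝ)

@[simp]
theorem coeff_factorialSeries (n : ℕ) : coeff n factorialSeries = n ! := coeff_mk _ _

theorem constantCoeff_factorialSeries : constantCoeff factorialSeries = 1 := by
  simp [← coeff_zero_eq_constantCoeff_apply]

theorem nonneg_of_forall_abs_le_mul_factorial {g : ℕ → ℝ} {C : ℝ} (h : ∀ n, |g n| ≤ C * n !) :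
    0 ≤ C := by
  simpa using (abs_nonneg _).trans (h 0)

def IsFactorialBounded (F : ℝ⟦X⟧) : Prop := ∃ C, ∀ n, |coeff n F| ≤ C * n !

namespace IsFactorialBounded

theorem one : IsFactorialBounded 1 :=
  ⟨1, fun n ↦ by rcases n with _ | n <;> simp [coeff_one]⟩

theorem mul {F G : ℝ⟦X⟧} (hF : IsFactorialBounded F) (hG : IsFactorialBounded G) :
    IsFactorialBounded (F * G) := by
  obtain ⟨a, ha⟩ := hF
  obtain ⟨b, hb⟩ := hG
  have ha0 := nonneg_of_forall_abs_le_mul_factorial ha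
  have hb0 := nonneg_of_forall_abs_le_mul_factorial hb
  refine ⟨a * b * 3, fun n ↦ ?_⟩
  have hsum : (∑ p ∈ antidiagonal n, (p.1 ! * p.2 ! : ℝ)) ≤ 3 * n ! := by
    exact_mod_cast Nat.sum_antidiagonal_factorial_mul_factorial_le n
  rw [coeff_mul]
  calc |∑ p ∈ antidiagonal n, coeff p.1 F * coeff p.2 G|
      ≤ ∑ p ∈ antidiagonal n, (a * p.1 !) * (b * p.2 !) :=
        (abs_sum_le_sum_abs _ _).trans <| sum_le_sum fun p _ ↦ by
          rw [abs_mul]; exact mul_le_mul (ha _) (hb _) (abs_nonneg _) (by positivity)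
    _ = a * b * ∑ p ∈ antidiagonal n, (p.1 ! * p.2 ! : ℝ) := by
        rw [mul_sum]; exact sum_congr rfl fun _ _ ↦ by ring
    _ ≤ a * b * (3 * n !) := by gcongr
    _ = a * b * 3 * n ! := by ring

theorem pow {F : ℝ⟦X⟧} (hF : IsFactorialBounded F) (t : ℕ) : IsFactorialBounded (F ^ t) := by
  induction t with
  | zero => simpa using one
  | succ t ih => simpa [pow_succ] using ih.mul hF

theorem smul {F : ℝ⟦X⟧} (hF : IsFactorialBounded F) (c : ℝ) : IsFactorialBounded (c • F) := by
  obtain ⟨C, hC⟩ := hF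
  exact ⟨|c| * C, fun n ↦ by
    rw [coeff_smul, smul_eq_mul, abs_mul, mul_assoc]
    exact mul_le_mul_of_nonneg_left (hC n) (abs_nonneg c)⟩

end IsFactorialBounded

theorem coeff_inv_factorialSeries_mem_Icc {n : ℕ} (hn : 0 < n) :
    coeff n factorialSeries⁻¹ ∈ Set.Icc (-(n ! : ℝ)) 0 := by
  induction n using Nat.strong_induction_on with
  | _ n ih =>
  have hprod : coeff n (factorialSeries * factorialSeries⁻¹) = 0 := by
    rw [PowerSeries.mul_inv_cancel _ (by simp [constantCoeff_factorialSeries]), coeff_one,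
      if_neg hn.ne']
  rw [coeff_mul, Finset.Nat.sum_antidiagonal_eq_sum_range_succ
      (fun i j ↦ coeff i factorialSeries * coeff j factorialSeries⁻¹), Nat.range_succ_eq_Icc_zero,
    Icc_eq_cons_Ioc (Nat.zero_le n), sum_cons, Ioc_eq_cons_Ioo hn, sum_cons] at hprod
  simp only [coeff_factorialSeries, Nat.factorial_zero, Nat.cast_one, one_mul, Nat.sub_zero,
    Nat.sub_self, coeff_zero_eq_constantCoeff, constantCoeff_inv, constantCoeff_factorialSeries,
    inv_one, mul_one] at hprod
  have hmid : ∀ i ∈ Ioo 0 n,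
      (i ! : ℝ) * coeff (n - i) factorialSeries⁻¹ ∈ Set.Icc (-(i ! * (n - i)! : ℝ)) 0 := by
    intro i hi
    rw [mem_Ioo] at hi
    obtain ⟨hlo, hhi⟩ := ih (n - i) (by omega) (by omega)
    have : (0 : ℝ) < i ! := by positivity
    constructor <;> nlinarith
  have hbound : (∑ i ∈ Ioo 0 n, (i ! * (n - i)! : ℝ)) ≤ n ! := by
    exact_mod_cast (by simpa using Nat.sum_Ioo_factorial_mul_factorial_le 0 n)
  have hlo := sum_le_sum fun i hi ↦ (hmid i hi).1
  have hhi := sum_nonpos fun i hi ↦ (hmid i hi).2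
  rw [sum_neg_distrib] at hlo
  constructor <;> linarith

theorem isFactorialBounded_inv_factorialSeries : IsFactorialBounded factorialSeries⁻¹ := by
  refine ⟨1, fun n ↦ ?_⟩
  rcases Nat.eq_zero_or_pos n with rfl | hn
  · simp [constantCoeff_factorialSeries]
  · obtain ⟨hlo, hhi⟩ := coeff_inv_factorialSeries_mem_Icc hn
    rw [one_mul, abs_le]
    constructor <;> linarith [Nat.cast_nonneg (α := ℝ) n !]

theorem natCast_mul_coeff_eq_sum_of_derivative_eq {F G : ℝ⟦X⟧}
    (h : d⁄dX ℝ F = d⁄dX ℝ factorialSeries * G) (n : ℕ) :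
    n * coeff n F = ∑ p ∈ antidiagonal n, coeff p.1 G * (p.2 * p.2 ! : ℝ) := by
  rcases n with _ | m
  · simp
  have hm := congrArg (coeff m) h
  rw [mul_comm, coeff_derivative, coeff_mul] at hm
  rw [Finset.Nat.sum_antidiagonal_succ', mul_comm, Nat.cast_succ, hm]
  simp only [coeff_derivative, coeff_factorialSeries, Nat.factorial_succ]
  push_cast
  rw [zero_mul, mul_zero, zero_add]
  exact sum_congr rfl fun _ _ ↦ by ring

theorem derivative_inv_pow {k : Type*} [Field k] (f : k⟦X⟧) (t : ℕ) :
    d⁄dX k (f⁻¹ ^ t) = d⁄dX k f * ((-t : k) • f⁻¹ ^ (t + 1)) := by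
  rcases t with _ | t
  · simp
  rw [derivative_pow, derivative_inv', smul_eq_C_mul, map_neg, map_natCast]
  simp only [Nat.add_sub_cancel]
  ring

theorem expPS_eq_subst_exp {C : ℝ⟦X⟧} (hC : constantCoeff C = 0) :
    expPS C = (exp ℝ).subst C := by
  ext n
  rw [expPS, coeff_mk, coeff_subst' (HasSubst.of_constantCoeff_zero' hC),
    finsum_eq_sum_of_support_subset (s := range (n + 1))]
  · refine sum_congr rfl fun k _ ↦ ?_
    simp [coeff_exp, div_eq_inv_mul]
  · refine Function.support_subset_iff'.2 fun k hk ↦ ?_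
    rw [coe_range, Set.mem_Iio, not_lt] at hk
    rw [coeff_of_lt_order n ((Nat.cast_lt.mpr (by omega)).trans_le
      (le_order_pow_of_constantCoeff_eq_zero k hC)), smul_zero]

theorem derivative_expPS {C : ℝ⟦X⟧} (hC : constantCoeff C = 0) :
    d⁄dX ℝ (expPS C) = expPS C * d⁄dX ℝ C := by
  rw [expPS_eq_subst_exp hC, derivative_subst (HasSubst.of_constantCoeff_zero' hC), derivative_exp]

theorem natCast_mul_sub_sum_eq {f g h : ℕ → ℝ} {r n : ℕ}
    (hf : n * f n = ∑ p ∈ antidiagonal n, g p.1 * (p.2 * p.2 ! : ℝ))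
    (hg : ∀ k, k * g k = ∑ p ∈ antidiagonal k, h p.1 * (p.2 * p.2 ! : ℝ)) (hn : 2 * r < n) :
    n * (f n - ∑ k ∈ range (r + 1), g k * (n - k)!) =
      ∑ k ∈ Icc (r + 1) (n - (r + 1)), g k * ((n - k : ℕ) * (n - k)! : ℝ) +
        ∑ j ∈ range (r + 1),
          (j * j ! : ℝ) * (g (n - j) - ∑ i ∈ range (r + 1 - j), h i * (n - j - i)!) := by
  have hbottom : ∑ k ∈ range (r + 1), (k : ℝ) * g k * (n - k)! =
      ∑ j ∈ range (r + 1), (j * j ! : ℝ) * ∑ i ∈ range (r + 1 - j), h i * (n - j - i)! := by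
    calc ∑ k ∈ range (r + 1), (k : ℝ) * g k * (n - k)!
        = ∑ k ∈ range (r + 1), ∑ j ∈ range (k + 1),
            (j * j ! : ℝ) * (h (k - j) * (n - j - (k - j))!) := by
          refine sum_congr rfl fun k hk ↦ ?_
          rw [hg k, ← Finset.Nat.sum_antidiagonal_swap]
          simp only [Prod.fst_swap, Prod.snd_swap]
          rw [Finset.Nat.sum_antidiagonal_eq_sum_range_succ
              (fun a b ↦ h b * (a * a ! : ℝ)) k, sum_mul]
          refine sum_congr rfl fun j hj ↦ ?_
          rw [mem_range] at hj hk
          rw [show n - j - (k - j) = n - k by omega]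
          ring
      _ = _ := by
          rw [sum_range_diag_flip (r + 1) fun j i ↦ (j * j ! : ℝ) * (h i * (n - j - i)!)]
          simp only [mul_sum]
  have hsplit := sum_range_succ_eq_add_sum_Icc_add (fun k ↦ g k * ((n - k : ℕ) * (n - k)! : ℝ)) hn
  rw [← Finset.Nat.sum_antidiagonal_eq_sum_range_succ (fun a b ↦ g a * (b * b ! : ℝ)), ← hf]
    at hsplit
  have htop : ∀ j ∈ range (r + 1), g (n - j) * ((n - (n - j) : ℕ) * (n - (n - j))! : ℝ) =
      (j * j ! : ℝ) * g (n - j) := by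
    intro j hj
    rw [mem_range] at hj
    rw [show n - (n - j) = j by omega]
    ring
  have hlow : ∀ k ∈ range (r + 1), g k * ((n - k : ℕ) * (n - k)! : ℝ) =
      n * (g k * (n - k)!) - k * g k * (n - k)! := by
    intro k hk
    rw [mem_range] at hk
    rw [Nat.cast_sub (by omega)]
    ring
  rw [sum_congr rfl htop, sum_congr rfl hlow, sum_sub_distrib, ← mul_sum, hbottom] at hsplit
  simp only [mul_sub, sum_sub_distrib]
  linear_combination hsplit

def HasFactorialExpansion (F G : ℝ⟦X⟧) (r : ℕ) : Prop :=
  (fun n ↦ coeff n F - ∑ k ∈ range (r + 1), coeff k G * (n - k)!) =O[atTop]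
    fun n ↦ ((n - (r + 1))! : ℝ)

theorem HasFactorialExpansion.smul {F G : ℝ⟦X⟧} {r : ℕ} (h : HasFactorialExpansion F G r)
    (c : ℝ) : HasFactorialExpansion (c • F) (c • G) r := by
  refine (h.const_mul_left c).congr_left fun n ↦ ?_
  simp only [coeff_smul, smul_eq_mul, mul_sub, mul_sum, mul_assoc]

theorem isBigO_inv_mul_sum_Icc {g : ℕ → ℝ} {C : ℝ} (hg : ∀ k, |g k| ≤ C * k !) (s : ℕ) :
    (fun n : ℕ ↦ (n : ℝ)⁻¹ * ∑ k ∈ Icc s (n - s), g k * ((n - k : ℕ) * (n - k)! : ℝ))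
      =O[atTop] fun n ↦ ((n - s)! : ℝ) := by
  have hC := nonneg_of_forall_abs_le_mul_factorial hg
  refine isBigO_iff.2 ⟨C * (2 * s ! + (s + 1)!), ?_⟩
  filter_upwards [eventually_gt_atTop (2 * s)] with n hn
  have hsum : (∑ k ∈ Icc s (n - s), (k ! * (n - k)! : ℝ)) ≤ (2 * s ! + (s + 1)!) * (n - s)! := by
    exact_mod_cast Nat.sum_Icc_factorial_mul_factorial_le hn
  have hn0 : (0 : ℝ) < n := by exact_mod_cast (by omega : 0 < n)
  rw [Real.norm_eq_abs, Real.norm_eq_abs, abs_mul, abs_inv, abs_of_pos hn0,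
    abs_of_nonneg (by positivity : (0 : ℝ) ≤ (n - s)!), inv_mul_le_iff₀ hn0]
  calc |∑ k ∈ Icc s (n - s), g k * ((n - k : ℕ) * (n - k)! : ℝ)|
      ≤ ∑ k ∈ Icc s (n - s), (C * k !) * (n * (n - k)! : ℝ) :=
        (abs_sum_le_sum_abs _ _).trans <| sum_le_sum fun k _ ↦ by
          rw [abs_mul, abs_of_nonneg (by positivity : (0 : ℝ) ≤ (n - k : ℕ) * (n - k)!)]
          gcongr
          · exact hg k
          exact_mod_cast Nat.sub_le n k
    _ = n * (C * ∑ k ∈ Icc s (n - s), (k ! * (n - k)! : ℝ)) := by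
        rw [mul_sum, mul_sum]; exact sum_congr rfl fun _ _ ↦ by ring
    _ ≤ n * (C * ((2 * s ! + (s + 1)!) * (n - s)!)) := by gcongr
    _ = n * (C * (2 * s ! + (s + 1)!) * (n - s)!) := by ring

theorem HasFactorialExpansion.of_derivative_eq {F G H : ℝ⟦X⟧} {r : ℕ}
    (hF : d⁄dX ℝ F = d⁄dX ℝ factorialSeries * G) (hG : d⁄dX ℝ G = d⁄dX ℝ factorialSeries * H)
    (hGb : IsFactorialBounded G) (hGH : ∀ s < r, HasFactorialExpansion G H s) :
    HasFactorialExpansion F G r := by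
  obtain ⟨C, hC⟩ := hGb
  set tail : ℕ → ℝ := fun n ↦ ∑ j ∈ range (r + 1), (j * j ! : ℝ) *
    (coeff (n - j) G - ∑ i ∈ range (r + 1 - j), coeff i H * (n - j - i)!)
  have hidentity : (fun n : ℕ ↦ coeff n F - ∑ k ∈ range (r + 1), coeff k G * (n - k)!) =ᶠ[atTop]
      fun n ↦ (n : ℝ)⁻¹ * ∑ k ∈ Icc (r + 1) (n - (r + 1)),
        coeff k G * ((n - k : ℕ) * (n - k)! : ℝ) + (n : ℝ)⁻¹ * tail n := by
    filter_upwards [eventually_gt_atTop (2 * r)] with n hn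
    have hn0 : (n : ℝ) ≠ 0 := by exact_mod_cast (by omega : n ≠ 0)
    rw [← mul_add, ← natCast_mul_sub_sum_eq (f := fun n ↦ coeff n F) (g := fun n ↦ coeff n G)
      (h := fun n ↦ coeff n H) (natCast_mul_coeff_eq_sum_of_derivative_eq hF n)
      (natCast_mul_coeff_eq_sum_of_derivative_eq hG) hn, inv_mul_cancel_left₀ hn0]
  have htail : tail =O[atTop] fun n ↦ ((n - (r + 1))! : ℝ) := by
    refine IsBigO.fun_sum fun j hj ↦ ?_
    rcases Nat.eq_zero_or_pos j with rfl | hj0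
    · simpa using isBigO_zero _ _
    rw [mem_range] at hj
    refine (((hGH (r - j) (by omega)).comp_tendsto (tendsto_sub_atTop_nat j)).const_mul_left
      (j * j ! : ℝ)).congr (fun n ↦ ?_) (fun n ↦ ?_)
    · simp only [Function.comp_apply, show r - j + 1 = r + 1 - j by omega]
    · simp only [Function.comp_apply, show n - j - (r - j + 1) = n - (r + 1) by omega]
  have hinv : (fun n : ℕ ↦ (n : ℝ)⁻¹) =O[atTop] fun _ ↦ (1 : ℝ) :=
    (tendsto_inv_atTop_zero.comp tendsto_natCast_atTop_atTop).isBigO_one ℝ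
  refine ((isBigO_inv_mul_sum_Icc hC (r + 1)).add ?_).congr' hidentity.symm (.refl _ _)
  simpa using hinv.mul htail

theorem hasFactorialExpansion_inv_pow (r t : ℕ) :
    HasFactorialExpansion (factorialSeries⁻¹ ^ t) ((-t : ℝ) • factorialSeries⁻¹ ^ (t + 1)) r := by
  induction r using Nat.strong_induction_on generalizing t with
  | _ r ih =>
  refine .of_derivative_eq (derivative_inv_pow _ t) ?_
    ((isFactorialBounded_inv_factorialSeries.pow _).smul _) fun s hs ↦ (ih s hs (t + 1)).smul _
  rw [(d⁄dX ℝ).map_smul, derivative_inv_pow]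
  simp only [mul_smul_comm]

theorem hasFactorialExpansion_of_factorialSeries_eq_expPS {B : ℝ⟦X⟧}
    (hB : constantCoeff B = 0) (hA : factorialSeries = expPS B) (r : ℕ) :
    HasFactorialExpansion B factorialSeries⁻¹ r := by
  have hA' : d⁄dX ℝ factorialSeries = factorialSeries * d⁄dX ℝ B := by
    conv_lhs => rw [hA]
    rw [derivative_expPS hB, ← hA]
  have hB' : d⁄dX ℝ B = d⁄dX ℝ factorialSeries * factorialSeries⁻¹ := by
    rw [hA', mul_comm factorialSeries, mul_assoc,
      PowerSeries.mul_inv_cancel _ (by simp [constantCoeff_factorialSeries]), mul_one]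
  refine .of_derivative_eq hB' ?_ isFactorialBounded_inv_factorialSeries
    fun s _ ↦ by simpa using hasFactorialExpansion_inv_pow s 1
  simpa using derivative_inv_pow factorialSeries 1

theorem HasFactorialExpansion.isBigO_div_factorial {F G : ℝ⟦X⟧} {r : ℕ}
    (h : HasFactorialExpansion F G r) :
    (fun n ↦ coeff n F / (n ! : ℝ) - ∑ k ∈ range (r + 1), coeff k G / n.descFactorial k)
      =O[atTop] fun n ↦ 1 / (n : ℝ) ^ (r + 1) := by
  refine ((h.mul (isBigO_refl (fun n ↦ (n ! : ℝ)⁻¹) atTop)).trans ?_).congr' ?_ (.refl _ _)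
  · refine (isBigO_inv_descFactorial (r + 1)).congr' ?_ (.refl _ _)
    filter_upwards [eventually_ge_atTop (r + 1)] with n hn
    rw [← div_eq_mul_inv, Nat.factorial_sub_div_factorial hn]
  · filter_upwards [eventually_ge_atTop r] with n hn
    rw [sub_mul, sum_mul, div_eq_mul_inv]
    refine congrArg _ (sum_congr rfl fun k hk ↦ ?_)
    rw [mem_range] at hk
    rw [mul_assoc, ← div_eq_mul_inv, Nat.factorial_sub_div_factorial (by omega), div_eq_mul_inv]

theorem origami_connected_general
    (co ip : ℕ → ℝ) (hco0 : co 0 = 0)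
    (hexp : (PowerSeries.mk fun n => ((Nat.factorial n : ℝ)) ^ 2 / (Nat.factorial n)) =
      expPS (PowerSeries.mk fun n => co n / (Nat.factorial n)))
    (hip : (PowerSeries.mk fun k => ip k) =
      1 - (PowerSeries.mk fun n => ((Nat.factorial n : ℝ)))⁻¹) :
    ∀ r : ℕ,
      (fun n => co n / ((Nat.factorial n : ℝ)) ^ 2 -
          (1 - ∑ k ∈ Finset.Icc 1 r, ip k / (n.descFactorial k : ℝ)))
        =O[atTop] fun n => 1 / (n : ℝ) ^ (r + 1) := by
  intro r
  change _ = 1 - factorialSeries⁻¹ at hip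
  have hA : (mk fun n ↦ (n ! : ℝ) ^ 2 / n !) = factorialSeries := by
    ext n
    simp [factorialSeries, sq]
  have hB0 : constantCoeff (mk fun n ↦ co n / n !) = 0 := by
    simp [← coeff_zero_eq_constantCoeff_apply, hco0]
  have hip' : ∀ k ∈ Icc 1 r, coeff k factorialSeries⁻¹ = -ip k := by
    intro k hk
    have hk0 : k ≠ 0 := by rw [mem_Icc] at hk; omega
    have := congrArg (coeff k) hip
    rw [coeff_mk, map_sub, coeff_one, if_neg hk0, zero_sub] at this
    linarith
  refine (hasFactorialExpansion_of_factorialSeries_eq_expPS hB0 (hA ▸ hexp) r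
    |>.isBigO_div_factorial).congr (fun n ↦ ?_) fun _ ↦ rfl
  rw [range_eq_Ico, sum_eq_sum_Ico_succ_bot (by omega), Ico_add_one_right_eq_Icc,
    sum_congr rfl fun k hk ↦ by rw [hip' k hk]]
  simp [neg_div, constantCoeff_factorialSeries, div_div, sq, sub_eq_add_neg]

/-- asymptotic probability that a random origami is connected. -/
theorem origami_connected
    (co ip : ℕ → ℝ) (hco0 : co 0 = 0) (hip0 : ip 0 = 0)
    (hexp : (PowerSeries.mk fun n => ((Nat.factorial n : ℝ)) ^ 2 / (Nat.factorial n)) =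
      expPS (PowerSeries.mk fun n => co n / (Nat.factorial n)))
    (hip : (PowerSeries.mk fun k => ip k) =
      1 - (PowerSeries.mk fun n => ((Nat.factorial n : ℝ)))⁻¹) :
    ∀ r : ℕ,
      (fun n => co n / ((Nat.factorial n : ℝ)) ^ 2 -
          (1 - ∑ k ∈ Finset.Icc 1 r, ip k / (n.descFactorial k : ℝ)))
        =O[atTop] fun n => 1 / (n : ℝ) ^ (r + 1) :=
  origami_connected_general co ip hco0 hexp hip
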